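/- Let S be an uncountable set, U a σ-complete ultrafilter over S, X a countably tight topological space, and {O_s : s ∈ S} a family of open subsets of X. Then the set O = {x ∈ X : {s ∈ S : x ∈ O_s} ∈ U} is open in X. -/
import Mathlib


universe u v

open Cardinal

/-- A filter is σ-complete (countably complete) if it is closed under countable
intersections of its members. -/
def SigmaComplete {A : Type u} (F : Filter A) : Prop :=
  ∀ s : Set (Set A), s.Countable → (∀ t ∈ s, t ∈ F) → ⋂₀ s ∈ F

/-- A topological space is countably tight if every point in the closure of a set `A`
is in the closure of a countable subset of `A`. -/
def CountablyTight (X : Type v) [TopologicalSpace X] : Prop :=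
  ∀ (A : Set X) (p : X), p ∈ closure A → ∃ B ⊆ A, B.Countable ∧ p ∈ closure B

/-- let `S` be an uncountable set, `U` a σ-complete ultrafilter over `S`,
`X` a countably tight topological space, and `{O s : s ∈ S}` a family of open subsets
of `X`.  Then the set `O = {x ∈ X : {s ∈ S : x ∈ O s} ∈ U}` is open in `X`. -/
theorem stmt17 {S : Type u} (hS : ℵ₀ < #S) (U : Ultrafilter S)
    (hU : SigmaComplete (U : Filter S))
    {X : Type v} [TopologicalSpace X] (ht : CountablyTight X)
    (O : S → Set X) (hO : ∀ s, IsOpen (O s)) :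
    IsOpen {x : X | {s : S | x ∈ O s} ∈ U} := by
  rw [← isClosed_compl_iff]
  apply isClosed_of_closure_subset
  intro p hp
  obtain ⟨B, hBsub, hBc, hpB⟩ := ht _ p hp
  have hT : ⋂₀ ((fun x => {s : S | x ∉ O s}) '' B) ∈ U := by
    apply hU _ (hBc.image _)
    rintro t ⟨x, hx, rfl⟩
    have hx' : {s : S | x ∈ O s} ∉ U := hBsub hx
    have : {s : S | x ∈ O s}ᶜ ∈ U := Ultrafilter.compl_mem_iff_notMem.mpr hx'
    simpa [Set.compl_setOf] using this
  simp only [Set.mem_compl_iff, Set.mem_setOf_eq]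
  rw [← Ultrafilter.compl_mem_iff_notMem]
  apply U.toFilter.mem_of_superset hT
  intro s hs
  have hB : B ⊆ (O s)ᶜ := by
    intro x hx
    exact hs _ ⟨x, hx, rfl⟩
  have : closure B ⊆ (O s)ᶜ := closure_minimal hB (hO s).isClosed_compl
  exact this hpB
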